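/- arXiv:1605.00119 — 2 statements merged into one kernel-verified Lean document; each statement's English description precedes it below -/
import Mathlib

section
/- Let k ≥ 2 be an integer, σ > 0, b ≥ 0, D_k > 0, and C_k > 0 be reals. Let the higher-priority tasks be partitioned into hp_1 (those with period T_i < D_k) and hp_2 (those with T_i ≥ D_k), each task having period T_i > 0, execution time C_i > 0, and utilization U_i = C_i/T_i. Set C_k' = C_k + Σ_{τ_i ∈ hp_2} σ·(1+b)·C_i. If (C_k'/D_k + (1+b))·∏_{τ_i ∈ hp_1}(σ·U_i + 1) ≤ 2 + b, then there exists t with 0 < t ≤ D_k such that C_k + Σ_{τ_i ∈ hp_1 ∪ hp_2} σ·(⌈t/T_i⌉·C_i + b·C_i) ≤ t. -/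
/-!
Suppose the test fails at every `t ∈ (0, D_k]`. A task of `hp2` releases exactly one job before
`D_k ≤ T_i`, which turns `C_k` into `C_k'`. A task of `hp1` gets the test point
`x_i = T_i (⌈D_k / T_i⌉ - 1) < D_k`, its last release before `D_k`: at `t = x_j` the tasks with
`x_i < x_j` contribute one job more than at their own point, and at `t = D_k` all of them do. These
are the hypotheses of Lemma 1 of the k2U framework with `α = σ (1 + b)` and `β = σ`. Writing `Y`
for `C_k'` plus the `α`-terms, along the sorted points the bound `Y + ∑_{x_i < x_j} β U_i x_i` on
`x_j` grows at each step by a factor at most `1 + β U_j`, so `Y + ∑ β U_i x_i ≤ Y ∏ (1 + β U_i)`; eliminating `Y` gives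
`(C_k' / D_k + α / β) ∏ (β U_i + 1) > α / β + 1`, against the hypothesis.
-/

open Finset

theorem add_sum_mul_le_mul_prod_add_one {ι : Type*} [DecidableEq ι] (s : Finset ι)
    (t u : ι → ℝ) (Y : ℝ) (hu : ∀ i ∈ s, 0 ≤ u i) (ht : ∀ i ∈ s, 0 ≤ t i)
    (h : ∀ j ∈ s, t j ≤ Y + ∑ i ∈ s with t i < t j, u i * t i) :
    Y + ∑ i ∈ s, u i * t i ≤ Y * ∏ i ∈ s, (u i + 1) := by
  induction s using Finset.induction_on_max_value t with
  | empty => simp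
  | insert a s ha hmax ih =>
    have hua : 0 ≤ u a := hu a (mem_insert_self a s)
    have hfilter : ∀ j ∈ s, {i ∈ insert a s | t i < t j} = {i ∈ s | t i < t j} := by
      intro j hj
      rw [filter_insert, if_neg (hmax j hj).not_gt]
    have hs := ih (fun i hi => hu i (mem_insert_of_mem hi))
      (fun i hi => ht i (mem_insert_of_mem hi))
      fun j hj => hfilter j hj ▸ h j (mem_insert_of_mem hj)
    have hta : t a ≤ Y + ∑ i ∈ s, u i * t i := by
      refine (h a (mem_insert_self a s)).trans ((add_le_add_iff_left Y).mpr ?_)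
      refine sum_le_sum_of_subset_of_nonneg (fun i hi => ?_) fun i hi _ => ?_
      · simp only [mem_filter, mem_insert] at hi
        exact hi.1.resolve_left (by rintro rfl; exact lt_irrefl _ hi.2)
      · exact mul_nonneg (hu i (mem_insert_of_mem hi)) (ht i (mem_insert_of_mem hi))
    rw [sum_insert ha, prod_insert ha]
    calc Y + (u a * t a + ∑ i ∈ s, u i * t i)
        ≤ (Y + ∑ i ∈ s, u i * t i) * (u a + 1) := by nlinarith
      _ ≤ (Y * ∏ i ∈ s, (u i + 1)) * (u a + 1) := by gcongr
      _ = Y * ((u a + 1) * ∏ i ∈ s, (u i + 1)) := by ring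

theorem k2u_hyperbolic_lt {ι : Type*} [DecidableEq ι] (s : Finset ι) (t U a e : ι → ℝ)
    (C tk α β : ℝ) (hC : 0 < C) (htk : 0 < tk) (hα : 0 ≤ α) (hβ : 0 < β)
    (hU : ∀ i ∈ s, 0 ≤ U i) (ht : ∀ i ∈ s, 0 ≤ t i)
    (ha : ∀ i ∈ s, a i ≤ α * U i * t i) (he : ∀ i ∈ s, e i ≤ β * U i * t i)
    (hpoint : ∀ j ∈ s, t j ≤ C + ∑ i ∈ s, a i + ∑ i ∈ s with t i < t j, e i)
    (hlast : tk < C + ∑ i ∈ s, a i + ∑ i ∈ s, e i) :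
    α / β + 1 < (C / tk + α / β) * ∏ i ∈ s, (β * U i + 1) := by
  set r := α / β
  set P := ∏ i ∈ s, (β * U i + 1)
  set Y := C + ∑ i ∈ s, a i
  set V := ∑ i ∈ s, β * U i * t i
  have hr : 0 ≤ r := div_nonneg hα hβ.le
  have hP : 0 < P := prod_pos fun i hi => by nlinarith [hU i hi]
  have hYV : Y ≤ C + r * V := by
    have : ∑ i ∈ s, a i ≤ r * V := by
      rw [mul_sum]
      exact sum_le_sum fun i hi => (ha i hi).trans_eq (by simp only [r]; field_simp)
    linarith
  have hgrowth : Y + V ≤ Y * P := by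
    have := add_sum_mul_le_mul_prod_add_one s t (fun i => β * U i) Y
      (fun i hi => mul_nonneg hβ.le (hU i hi)) ht fun j hj => (hpoint j hj).trans <|
        (add_le_add_iff_left Y).mpr (sum_le_sum fun i hi => he i (mem_filter.mp hi).1)
    simpa only [V] using this
  have htkP : tk < Y * P :=
    hlast.trans_le (((add_le_add_iff_left Y).mpr (sum_le_sum he)).trans hgrowth)
  rw [div_add' _ _ _ htk.ne', div_mul_eq_mul_div, lt_div_iff₀ htk]
  by_cases hslack : r + 1 - r * P ≤ 0
  · nlinarith [mul_pos hC hP]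
  · have hY : Y * (r + 1 - r * P) ≤ C := by nlinarith [mul_le_mul_of_nonneg_left hgrowth hr]
    have : tk * (r + 1 - r * P) < C * P :=
      calc tk * (r + 1 - r * P) < Y * P * (r + 1 - r * P) := by gcongr; linarith
        _ = P * (Y * (r + 1 - r * P)) := by ring
        _ ≤ P * C := by gcongr
        _ = C * P := mul_comm P C
    linarith

theorem ceil_div_eq_one {t T : ℝ} (ht : 0 < t) (htT : t ≤ T) : ⌈t / T⌉ = 1 := by
  have hT : 0 < T := ht.trans_le htT
  rw [Int.ceil_eq_iff]
  constructor
  · norm_num; positivity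
  · push_cast; exact (div_le_one hT).mpr htT

theorem ceil_div_le_ceil_sub_one_add_ite {t T D : ℝ} (hT : 0 < T) (htD : t ≤ D) :
    (⌈t / T⌉ : ℝ) ≤ (⌈D / T⌉ - 1 : ℝ) + if T * (⌈D / T⌉ - 1) < t then 1 else 0 := by
  split_ifs with hlast
  · have : ⌈t / T⌉ ≤ ⌈D / T⌉ := Int.ceil_le_ceil (by gcongr)
    simpa using (Int.cast_le (R := ℝ)).mpr this
  · have : ⌈t / T⌉ ≤ ⌈D / T⌉ - 1 := by
      rw [Int.ceil_le, div_le_iff₀ hT]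
      push_cast
      linarith
    simpa using (Int.cast_le (R := ℝ)).mpr this

theorem one_le_ceil_div_sub_one {T D : ℝ} (hT : 0 < T) (hTD : T < D) :
    1 ≤ (⌈D / T⌉ - 1 : ℝ) := by
  have : (1 : ℝ) < D / T := (one_lt_div hT).mpr hTD
  have : (1 : ℤ) < ⌈D / T⌉ := Int.lt_ceil.mpr (by exact_mod_cast this)
  have : (2 : ℝ) ≤ ⌈D / T⌉ := by exact_mod_cast this
  linarith

theorem mul_ceil_div_sub_one_lt {T D : ℝ} (hT : 0 < T) : T * (⌈D / T⌉ - 1 : ℝ) < D := by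
  have := Int.ceil_lt_add_one (D / T)
  have : T * (⌈D / T⌉ - 1 : ℝ) < T * (D / T) := by gcongr; linarith
  rwa [mul_div_cancel₀ _ hT.ne'] at this

theorem hyperbolic_lt_of_forall_lt_demand {ι : Type*} [DecidableEq ι] (s : Finset ι)
    (T C U : ι → ℝ) (σ b D C₀ : ℝ) (hσ : 0 < σ) (hb : 0 ≤ b) (hD : 0 < D) (hC₀ : 0 < C₀)
    (hT : ∀ i ∈ s, 0 < T i) (hC : ∀ i ∈ s, 0 < C i) (hU : ∀ i ∈ s, U i = C i / T i)
    (hTD : ∀ i ∈ s, T i < D)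
    (hmiss : ∀ t, 0 < t → t ≤ D → t < C₀ + ∑ i ∈ s, σ * ((⌈t / T i⌉ : ℝ) * C i + b * C i)) :
    2 + b < (C₀ / D + (1 + b)) * ∏ i ∈ s, (σ * U i + 1) := by
  set n : ι → ℝ := fun i => ⌈D / T i⌉ - 1
  set x : ι → ℝ := fun i => T i * n i
  set a : ι → ℝ := fun i => σ * (n i * C i + b * C i)
  set e : ι → ℝ := fun i => σ * C i
  have hn : ∀ i ∈ s, 1 ≤ n i := fun i hi => one_le_ceil_div_sub_one (hT i hi) (hTD i hi)
  have hUx : ∀ i ∈ s, U i * x i = C i * n i := fun i hi => by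
    simp only [x, hU i hi]; field_simp [(hT i hi).ne']
  have hpoint : ∀ j ∈ s, x j ≤ C₀ + ∑ i ∈ s, a i + ∑ i ∈ s with x i < x j, e i := by
    intro j hj
    have hxj : x j ≤ D := (mul_ceil_div_sub_one_lt (hT j hj)).le
    have hbound : ∑ i ∈ s, σ * ((⌈x j / T i⌉ : ℝ) * C i + b * C i)
        ≤ ∑ i ∈ s, (a i + if x i < x j then e i else 0) := by
      refine sum_le_sum fun i hi => ?_
      have hceil := ceil_div_le_ceil_sub_one_add_ite (hT i hi) hxj
      have hσC := mul_pos hσ (hC i hi)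
      simp only [a, e, x, n] at hceil ⊢
      split_ifs at hceil ⊢ <;> nlinarith
    rw [sum_add_distrib, ← sum_filter] at hbound
    linarith [hmiss (x j) (by nlinarith [hn j hj, hT j hj]) hxj]
  have hlast : D < C₀ + ∑ i ∈ s, a i + ∑ i ∈ s, e i := by
    have hsplit : ∑ i ∈ s, σ * ((⌈D / T i⌉ : ℝ) * C i + b * C i)
        = ∑ i ∈ s, a i + ∑ i ∈ s, e i := by
      rw [← sum_add_distrib]
      exact sum_congr rfl fun i _ => by simp only [a, e, n]; ring
    linarith [hmiss D hD le_rfl]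
  have key := k2u_hyperbolic_lt s x U a e C₀ D (σ * (1 + b)) σ hC₀ hD (by positivity) hσ
    (fun i hi => by rw [hU i hi]; exact (div_pos (hC i hi) (hT i hi)).le)
    (fun i hi => by nlinarith [hn i hi, hT i hi])
    (fun i hi => by
      rw [mul_assoc (σ * (1 + b)), hUx i hi]; simp only [a]
      have hσbC : 0 ≤ σ * b * C i := mul_nonneg (mul_nonneg hσ.le hb) (hC i hi).le
      nlinarith [mul_nonneg hσbC (sub_nonneg.2 (hn i hi))])
    (fun i hi => by
      rw [mul_assoc σ, hUx i hi]; simp only [e]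
      nlinarith [mul_nonneg (mul_pos hσ (hC i hi)).le (sub_nonneg.2 (hn i hi))])
    hpoint hlast
  rw [mul_div_cancel_left₀ _ hσ.ne'] at key
  linarith

theorem constant_inflation_hyperbolic_test_general
    {ι : Type*} [DecidableEq ι]
    (σ b Dk Ck : ℝ)
    (hσ : 0 < σ) (hb : 0 ≤ b) (hDk : 0 < Dk) (hCk : 0 < Ck)
    (hp1 hp2 : Finset ι) (hdisj : Disjoint hp1 hp2)
    (T C U : ι → ℝ)
    (hT : ∀ i ∈ hp1 ∪ hp2, 0 < T i)
    (hC : ∀ i ∈ hp1 ∪ hp2, 0 < C i)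
    (hU : ∀ i ∈ hp1 ∪ hp2, U i = C i / T i)
    (h1 : ∀ i ∈ hp1, T i < Dk)
    (h2 : ∀ i ∈ hp2, Dk ≤ T i)
    (Ck' : ℝ) (hCk' : Ck' = Ck + ∑ i ∈ hp2, σ * (1 + b) * C i)
    (hcond : (Ck' / Dk + (1 + b)) * ∏ i ∈ hp1, (σ * U i + 1) ≤ 2 + b) :
    ∃ t : ℝ, 0 < t ∧ t ≤ Dk ∧
      Ck + ∑ i ∈ hp1 ∪ hp2, σ * ((⌈t / T i⌉ : ℝ) * C i + b * C i) ≤ t := by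
  by_contra! hmiss
  have hCk'_pos : 0 < Ck' := by
    rw [hCk']
    have := sum_nonneg fun i hi => (mul_pos (by positivity : 0 < σ * (1 + b))
      (hC i (mem_union_right hp1 hi))).le
    linarith
  have hmiss₁ : ∀ t, 0 < t → t ≤ Dk →
      t < Ck' + ∑ i ∈ hp1, σ * ((⌈t / T i⌉ : ℝ) * C i + b * C i) := by
    intro t ht htD
    have hp2_sum : ∑ i ∈ hp2, σ * ((⌈t / T i⌉ : ℝ) * C i + b * C i)
        = ∑ i ∈ hp2, σ * (1 + b) * C i :=
      sum_congr rfl fun i hi => by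
        rw [ceil_div_eq_one ht (htD.trans (h2 i hi))]; push_cast; ring
    have := hmiss t ht htD
    rw [sum_union hdisj, hp2_sum] at this
    linarith
  have := hyperbolic_lt_of_forall_lt_demand hp1 T C U σ b Dk Ck' hσ hb hDk hCk'_pos
    (fun i hi => hT i (mem_union_left hp2 hi)) (fun i hi => hC i (mem_union_left hp2 hi))
    (fun i hi => hU i (mem_union_left hp2 hi)) h1 hmiss₁
  linarith

theorem constant_inflation_hyperbolic_test
    {ι : Type*} [DecidableEq ι]
    (k : ℕ) (hk : 2 ≤ k) (σ b Dk Ck : ℝ)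
    (hσ : 0 < σ) (hb : 0 ≤ b) (hDk : 0 < Dk) (hCk : 0 < Ck)
    (hp1 hp2 : Finset ι) (hdisj : Disjoint hp1 hp2)
    (hcard : hp1.card + hp2.card = k - 1)
    (T C U : ι → ℝ)
    (hT : ∀ i ∈ hp1 ∪ hp2, 0 < T i)
    (hC : ∀ i ∈ hp1 ∪ hp2, 0 < C i)
    (hU : ∀ i ∈ hp1 ∪ hp2, U i = C i / T i)
    (h1 : ∀ i ∈ hp1, T i < Dk)
    (h2 : ∀ i ∈ hp2, Dk ≤ T i)
    (Ck' : ℝ) (hCk' : Ck' = Ck + ∑ i ∈ hp2, σ * (1 + b) * C i)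
    (hcond : (Ck' / Dk + (1 + b)) * ∏ i ∈ hp1, (σ * U i + 1) ≤ 2 + b) :
    ∃ t : ℝ, 0 < t ∧ t ≤ Dk ∧
      Ck + ∑ i ∈ hp1 ∪ hp2, σ * ((⌈t / T i⌉ : ℝ) * C i + b * C i) ≤ t :=
  constant_inflation_hyperbolic_test_general σ b Dk Ck hσ hb hDk hCk hp1 hp2 hdisj T C U hT hC hU h1
    h2 Ck' hCk' hcond
end

section
/- Let k ≥ 2 be an integer, σ > 0, D_k > 0, and C_k' > 0 be reals, and let δ ≥ 0 be a real that is not an integer. For each i = 1, …, k−1, let T_i > 0 and C_i > 0 be reals such that ⌈(D_k + δ·T_i)/T_i⌉ > ⌈δ⌉ + 1, and set g_i = ⌊(D_k + δ·T_i)/T_i⌋, t_i = (g_i − δ)·T_i, α_i = σ·g_i/(g_i − δ), and β_i = σ/(g_i − δ). Then every g_i is an integer with g_i > δ + 1, and 0 < α_i ≤ σ·(⌈δ⌉ + 1)/(⌈δ⌉ + 1 − δ) and 0 < β_i ≤ σ/(⌈δ⌉ + 1 − δ) for every i. Moreover, with t_k = D_k and the tasks indexed so that t_1 ≤ ⋯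 ≤ t_{k−1}, if there exists j ∈ {1, …, k} with C_k' + Σ_{i=1}^{k−1} α_i·t_i·U_i + Σ_{i=1}^{j−1} β_i·t_i·U_i ≤ t_j (where U_i = C_i/T_i), then there exists t with 0 < t ≤ D_k and C_k' + Σ_{i=1}^{k−1} σ·⌈(t + δ·T_i)/T_i⌉·C_i ≤ t. -/
/-!
Every higher-priority task has `g_i = ⌊(D_k + δ T_i)/T_i⌋ ≥ ⌈δ⌉ + 1`, which gives the coefficient
bounds since `x ↦ x / (x - δ)` is antitone for `x > δ ≥ 0`. For the test, take `t = t_j`. A task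
with `t_j ≤ t_i` releases at most `g_i` jobs in the window of length `t_j` (demand `α_i t_i U_i`),
and any other task at most `⌈(D_k + δ T_i)/T_i⌉ ≤ g_i + 1` (demand `(α_i + β_i) t_i U_i`).
-/

open Finset

section Jitter

variable {K : Type*} [Field K] [LinearOrder K] [IsStrictOrderedRing K]

theorem div_sub_le_div_sub_of_le {δ a x : K} (hδ : 0 ≤ δ) (ha : δ < a) (hax : a ≤ x) :
    x / (x - δ) ≤ a / (a - δ) := by
  rw [div_le_div_iff₀ (by linarith) (by linarith)]
  nlinarith

theorem mul_div_sub_bounds_of_le {σ δ a x : K} (hσ : 0 < σ) (hδ : 0 ≤ δ) (ha : δ < a)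
    (hax : a ≤ x) :
    (0 < σ * x / (x - δ) ∧ σ * x / (x - δ) ≤ σ * a / (a - δ)) ∧
      (0 < σ / (x - δ) ∧ σ / (x - δ) ≤ σ / (a - δ)) := by
  have hxδ : 0 < x - δ := by linarith
  have hx : 0 < x := by linarith
  rw [mul_div_assoc, mul_div_assoc]
  exact ⟨⟨by positivity, mul_le_mul_of_nonneg_left (div_sub_le_div_sub_of_le hδ ha hax) hσ.le⟩,
    by positivity, div_le_div_of_nonneg_left hσ.le (by linarith) (by linarith)⟩

variable [FloorRing K] {D δ T x : K}

theorem ceil_add_mul_div_le {n : ℤ} (hT : 0 < T) (hx : x ≤ (n - δ) * T) :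
    ⌈(x + δ * T) / T⌉ ≤ n :=
  Int.ceil_le.2 <| (div_le_iff₀ hT).2 <| by linarith

theorem ceil_add_mul_div_le_floor_add_one (hT : 0 < T) (hx : x ≤ D) :
    ⌈(x + δ * T) / T⌉ ≤ ⌊(D + δ * T) / T⌋ + 1 :=
  (Int.ceil_mono (by gcongr)).trans (Int.ceil_le_floor_add_one _)

theorem floor_add_mul_div_sub_mul_le (hT : 0 < T) : (⌊(D + δ * T) / T⌋ - δ) * T ≤ D := by
  have := (le_div_iff₀ hT).1 (Int.floor_le ((D + δ * T) / T))
  linarith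

theorem sum_mul_ceil_mul_le {m j : ℕ} (hjm : j ≤ m + 1) {σ : K} {T C : ℕ → K} {g : ℕ → ℤ}
    (hσ : 0 ≤ σ) (hT : ∀ i ∈ Icc 1 m, 0 < T i) (hC : ∀ i ∈ Icc 1 m, 0 ≤ C i)
    (hg : ∀ i ∈ Icc 1 m, g i = ⌊(D + δ * T i) / T i⌋) (hxD : x ≤ D)
    (hx : ∀ i ∈ Icc j m, x ≤ (g i - δ) * T i) :
    ∑ i ∈ Icc 1 m, σ * (⌈(x + δ * T i) / T i⌉ : K) * C i
      ≤ ∑ i ∈ Icc 1 m, σ * g i * C i + ∑ i ∈ Icc 1 (j - 1), σ * C i := by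
  have hsub : Icc 1 (j - 1) ⊆ Icc 1 m := Icc_subset_Icc_right (by omega)
  rw [← inter_eq_right.2 hsub, ← sum_ite_mem, ← sum_add_distrib]
  refine sum_le_sum fun i hi => ?_
  have hCi := hC i hi
  split_ifs with hij
  · have hceil : (⌈(x + δ * T i) / T i⌉ : K) ≤ g i + 1 := by
      rw [hg i hi]; exact_mod_cast ceil_add_mul_div_le_floor_add_one (hT i hi) hxD
    calc σ * (⌈(x + δ * T i) / T i⌉ : K) * C i ≤ σ * (g i + 1) * C i := by gcongr
      _ = σ * g i * C i + σ * C i := by ring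
  · have hceil : (⌈(x + δ * T i) / T i⌉ : K) ≤ g i := by
      have hi' : i ∈ Icc j m := by rw [mem_Icc] at hi hij ⊢; omega
      exact_mod_cast ceil_add_mul_div_le (hT i hi) (hx i hi')
    rw [add_zero]; gcongr

end Jitter

theorem arrival_jitter_k2u_parameters_refined_general
    (k : ℕ) (σ Dk Ck' δ : ℝ)
    (hσ : 0 < σ) (hDk : 0 < Dk) (hδ : 0 ≤ δ)
    (hδint : ∀ n : ℤ, (n : ℝ) ≠ δ)
    (T C : ℕ → ℝ)
    (hT : ∀ i ∈ Finset.Icc 1 (k - 1), 0 < T i)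
    (hC : ∀ i ∈ Finset.Icc 1 (k - 1), 0 < C i)
    (hhp1 : ∀ i ∈ Finset.Icc 1 (k - 1), ⌈δ⌉ + 1 < ⌈(Dk + δ * T i) / T i⌉)
    (U : ℕ → ℝ) (hU : ∀ i ∈ Finset.Icc 1 (k - 1), U i = C i / T i)
    (g : ℕ → ℤ) (hg : ∀ i ∈ Finset.Icc 1 (k - 1), g i = ⌊(Dk + δ * T i) / T i⌋)
    (t : ℕ → ℝ) (ht : ∀ i ∈ Finset.Icc 1 (k - 1), t i = ((g i : ℝ) - δ) * T i)
    (htk : t k = Dk)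
    (hmono : ∀ i ∈ Finset.Icc 1 (k - 1), ∀ j ∈ Finset.Icc 1 (k - 1), i ≤ j → t i ≤ t j)
    (A B : ℕ → ℝ)
    (hA : ∀ i ∈ Finset.Icc 1 (k - 1), A i = σ * (g i : ℝ) / ((g i : ℝ) - δ))
    (hB : ∀ i ∈ Finset.Icc 1 (k - 1), B i = σ / ((g i : ℝ) - δ)) :
    (∀ i ∈ Finset.Icc 1 (k - 1), δ + 1 < (g i : ℝ)) ∧
    (∀ i ∈ Finset.Icc 1 (k - 1),
      (0 < A i ∧ A i ≤ σ * ((⌈δ⌉ : ℝ) + 1) / ((⌈δ⌉ : ℝ) + 1 - δ)) ∧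
      (0 < B i ∧ B i ≤ σ / ((⌈δ⌉ : ℝ) + 1 - δ))) ∧
    ((∃ j ∈ Finset.Icc 1 k,
        Ck' + (∑ i ∈ Finset.Icc 1 (k - 1), A i * t i * U i)
          + (∑ i ∈ Finset.Icc 1 (j - 1), B i * t i * U i) ≤ t j) →
      ∃ t' : ℝ, 0 < t' ∧ t' ≤ Dk ∧
        Ck' + ∑ i ∈ Finset.Icc 1 (k - 1), σ * (⌈(t' + δ * T i) / T i⌉ : ℝ) * C i ≤ t') := by
  have hδ_lt : δ < ⌈δ⌉ := (Int.le_ceil δ).lt_of_ne (hδint ⌈δ⌉).symm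
  have hg_ge : ∀ i ∈ Icc 1 (k - 1), (⌈δ⌉ : ℝ) + 1 ≤ g i := fun i hi => by
    rw [hg i hi]; exact_mod_cast Int.le_floor.2 (Int.lt_ceil.1 (hhp1 i hi)).le
  have hgap : ∀ i ∈ Icc 1 (k - 1), 0 < (g i : ℝ) - δ := fun i hi => by linarith [hg_ge i hi]
  refine ⟨fun i hi => by linarith [hg_ge i hi], fun i hi => ?_, ?_⟩
  · rw [hA i hi, hB i hi]
    exact mul_div_sub_bounds_of_le hσ hδ (by linarith) (hg_ge i hi)
  · rintro ⟨j, hj, hfeasible⟩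
    rw [mem_Icc] at hj
    have htj : 0 < t j ∧ t j ≤ Dk := by
      rcases hj.2.eq_or_lt with rfl | hjk
      · exact ⟨htk ▸ hDk, htk.le⟩
      · have hj' : j ∈ Icc 1 (k - 1) := mem_Icc.2 ⟨hj.1, by omega⟩
        rw [ht j hj', hg j hj']
        exact ⟨mul_pos (hg j hj' ▸ hgap j hj') (hT j hj'), floor_add_mul_div_sub_mul_le (hT j hj')⟩
    have hAtU : ∀ i ∈ Icc 1 (k - 1), A i * t i * U i = σ * g i * C i := fun i hi => by
      rw [hA i hi, ht i hi, hU i hi]; field_simp [(hgap i hi).ne', (hT i hi).ne']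
    have hBtU : ∀ i ∈ Icc 1 (k - 1), B i * t i * U i = σ * C i := fun i hi => by
      rw [hB i hi, ht i hi, hU i hi]; field_simp [(hgap i hi).ne', (hT i hi).ne']
    refine ⟨t j, htj.1, htj.2, le_trans ?_ hfeasible⟩
    rw [sum_congr rfl hAtU, add_assoc,
      sum_congr rfl fun i hi => hBtU i (Icc_subset_Icc_right (by omega) hi)]
    gcongr
    refine sum_mul_ceil_mul_le (by omega) hσ.le hT (fun i hi => (hC i hi).le) hg htj.2 fun i hi => ?_
    have hi' := Icc_subset_Icc_left hj.1 hi
    rw [← ht i hi']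
    exact hmono j (mem_Icc.2 ⟨hj.1, (mem_Icc.1 hi).1.trans (mem_Icc.1 hi).2⟩) i hi' (mem_Icc.1 hi).1

theorem arrival_jitter_k2u_parameters_refined
    (k : ℕ) (hk : 2 ≤ k) (σ Dk Ck' δ : ℝ)
    (hσ : 0 < σ) (hDk : 0 < Dk) (hCk' : 0 < Ck') (hδ : 0 ≤ δ)
    (hδint : ∀ n : ℤ, (n : ℝ) ≠ δ)
    (T C : ℕ → ℝ)
    (hT : ∀ i ∈ Finset.Icc 1 (k - 1), 0 < T i)
    (hC : ∀ i ∈ Finset.Icc 1 (k - 1), 0 < C i)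
    (hhp1 : ∀ i ∈ Finset.Icc 1 (k - 1), ⌈δ⌉ + 1 < ⌈(Dk + δ * T i) / T i⌉)
    (U : ℕ → ℝ) (hU : ∀ i ∈ Finset.Icc 1 (k - 1), U i = C i / T i)
    (g : ℕ → ℤ) (hg : ∀ i ∈ Finset.Icc 1 (k - 1), g i = ⌊(Dk + δ * T i) / T i⌋)
    (t : ℕ → ℝ) (ht : ∀ i ∈ Finset.Icc 1 (k - 1), t i = ((g i : ℝ) - δ) * T i)
    (htk : t k = Dk)
    (hmono : ∀ i ∈ Finset.Icc 1 (k - 1), ∀ j ∈ Finset.Icc 1 (k - 1), i ≤ j → t i ≤ t j)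
    (A B : ℕ → ℝ)
    (hA : ∀ i ∈ Finset.Icc 1 (k - 1), A i = σ * (g i : ℝ) / ((g i : ℝ) - δ))
    (hB : ∀ i ∈ Finset.Icc 1 (k - 1), B i = σ / ((g i : ℝ) - δ)) :
    (∀ i ∈ Finset.Icc 1 (k - 1), δ + 1 < (g i : ℝ)) ∧
    (∀ i ∈ Finset.Icc 1 (k - 1),
      (0 < A i ∧ A i ≤ σ * ((⌈δ⌉ : ℝ) + 1) / ((⌈δ⌉ : ℝ) + 1 - δ)) ∧
      (0 < B i ∧ B i ≤ σ / ((⌈δ⌉ : ℝ) + 1 - δ))) ∧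
    ((∃ j ∈ Finset.Icc 1 k,
        Ck' + (∑ i ∈ Finset.Icc 1 (k - 1), A i * t i * U i)
          + (∑ i ∈ Finset.Icc 1 (j - 1), B i * t i * U i) ≤ t j) →
      ∃ t' : ℝ, 0 < t' ∧ t' ≤ Dk ∧
        Ck' + ∑ i ∈ Finset.Icc 1 (k - 1), σ * (⌈(t' + δ * T i) / T i⌉ : ℝ) * C i ≤ t') :=
  arrival_jitter_k2u_parameters_refined_general k σ Dk Ck' δ hσ hDk hδ hδint T C hT hC hhp1 U hU g
    hg t ht htk hmono A B hA hB
end
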